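/- arXiv:1211.7301 — 2 statements merged into one kernel-verified Lean document; each statement's English description precedes it below -/
import Mathlib

section
/- Let Δ₀ : ℝ → ℝ be Lebesgue integrable and define Δ(X,T) = ∫_ℝ G(X−Y,T) Δ₀(Y) dY for T > 0. Then for every real X and every T > 0, Δ is differentiable in T, four times differentiable in X, and satisfies the linearized capillary-driven thin film equation ∂_T Δ(X,T) + ∂_X⁴ Δ(X,T) = 0. -/
open MeasureTheory Real

/-- The Green's function of the linearized capillary-driven thin film equation. -/
noncomputable def greenFn (X T : ℝ) : ℝ :=
  (1 / (2 * Real.pi)) * ∫ K : ℝ, Real.exp (-K ^ 4 * T) * Real.cos (K * X)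

/-!
Exchanging the order of integration (Fubini: `e^{-K⁴T}` and `Δ₀` are both integrable) writes
`Δ(X,T) = ∫ e^{-K⁴T} Re (e^{iKX} Δ̂₀(K)) dK`, where `Δ̂₀` is the Fourier transform of `Δ₀`,
a bounded continuous function. Differentiating under this integral, which is legitimate since
every moment `|K|ⁿ e^{-K⁴T}` is integrable, multiplies the amplitude by `iK` for each
`X`-derivative and by `-K⁴` for the `T`-derivative; as `(iK)⁴ = K⁴` the two terms cancel.
-/

lemma abs_pow_mul_exp_neg_pow_four_le (n : ℕ) {t : ℝ} (ht : 0 < t) (K : ℝ) :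
    |K| ^ n * exp (-K ^ 4 * t) ≤ exp (n ^ 2 / (2 * t) + t) * exp (-(t / 2) * K ^ 2) := by
  have h_pow : |K| ^ n ≤ exp (n * |K|) := by
    rw [exp_nat_mul]
    exact pow_le_pow_left₀ (abs_nonneg K) ((le_add_of_nonneg_right zero_le_one).trans
      (add_one_le_exp _)) n
  have h_young : n * |K| ≤ n ^ 2 / (2 * t) + t / 2 * K ^ 2 := by
    rw [div_add' _ _ _ (by positivity), le_div_iff₀ (by positivity), ← sq_abs K]
    nlinarith [sq_nonneg (t * |K| - n)]
  have h_quartic : -K ^ 4 * t ≤ t - 2 * t * K ^ 2 := by nlinarith [sq_nonneg (K ^ 2 - 1)]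
  calc |K| ^ n * exp (-K ^ 4 * t) ≤ exp (n * |K|) * exp (-K ^ 4 * t) := by gcongr
    _ ≤ exp (n ^ 2 / (2 * t) + t) * exp (-(t / 2) * K ^ 2) := by
      rw [← exp_add, ← exp_add, exp_le_exp]
      nlinarith [sq_nonneg K]

lemma integrable_pow_mul_exp_neg_pow_four (n : ℕ) {t : ℝ} (ht : 0 < t) :
    Integrable fun K : ℝ => K ^ n * exp (-K ^ 4 * t) := by
  refine ((integrable_exp_neg_mul_sq (half_pos ht)).const_mul
    (exp (n ^ 2 / (2 * t) + t))).mono' (by fun_prop) (.of_forall fun K => ?_)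
  rw [norm_mul, norm_pow, Real.norm_eq_abs, Real.norm_of_nonneg (exp_pos _).le]
  exact abs_pow_mul_exp_neg_pow_four_le n ht K

open Complex (I)

noncomputable def waveIntegral (w : ℝ → ℝ) (c : ℝ → ℂ) (x : ℝ) : ℝ :=
  ∫ K, w K * (Complex.exp (K * x * I) * c K).re

lemma abs_re_exp_mul_I_mul_le (θ : ℝ) (z : ℂ) : |(Complex.exp (θ * I) * z).re| ≤ ‖z‖ :=
  (Complex.abs_re_le_norm _).trans_eq (by rw [norm_mul, Complex.norm_exp_ofReal_mul_I, one_mul])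

section

variable {w : ℝ → ℝ} {c : ℝ → ℂ} {M : ℝ}

lemma aestronglyMeasurable_wave (hw : AEStronglyMeasurable w) (hc : AEStronglyMeasurable c)
    (x : ℝ) : AEStronglyMeasurable fun K => w K * (Complex.exp (K * x * I) * c K).re :=
  hw.mul (Complex.continuous_re.comp_aestronglyMeasurable
    ((Continuous.aestronglyMeasurable (by fun_prop)).mul hc))

lemma norm_wave_le (hcM : ∀ K, ‖c K‖ ≤ M) (x K : ℝ) :
    ‖w K * (Complex.exp (K * x * I) * c K).re‖ ≤ ‖w K‖ * M := by
  rw [norm_mul]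
  gcongr
  rw [Real.norm_eq_abs]
  refine le_trans ?_ (hcM K)
  simpa using abs_re_exp_mul_I_mul_le (K * x) (c K)

lemma integrable_wave (hw : Integrable w) (hc : AEStronglyMeasurable c) (hcM : ∀ K, ‖c K‖ ≤ M)
    (x : ℝ) : Integrable fun K => w K * (Complex.exp (K * x * I) * c K).re :=
  (hw.norm.mul_const M).mono' (aestronglyMeasurable_wave hw.1 hc x)
    (.of_forall (norm_wave_le hcM x))

lemma hasDerivAt_re_exp_mul_I_mul (K : ℝ) (z : ℂ) (x : ℝ) :
    HasDerivAt (fun x : ℝ => (Complex.exp (K * x * I) * z).re)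
      (K * (Complex.exp (K * x * I) * (I * z)).re) x := by
  have := ((((hasDerivAt_id (x : ℂ)).const_mul (K : ℂ)).mul_const I).cexp.mul_const z)
  refine this.real_of_complex.congr_deriv ?_
  rw [← Complex.re_ofReal_mul]
  simp only [id]
  ring_nf

theorem hasDerivAt_waveIntegral (hw : Integrable w) (hKw : Integrable fun K => K * w K)
    (hc : AEStronglyMeasurable c) (hcM : ∀ K, ‖c K‖ ≤ M) (x : ℝ) :
    HasDerivAt (waveIntegral w c) (waveIntegral (fun K => K * w K) (fun K => I * c K) x) x := by
  have hIcM : ∀ K, ‖I * c K‖ ≤ M := fun K => by simpa using hcM K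
  refine (hasDerivAt_integral_of_dominated_loc_of_deriv_le
    (F' := fun y K => K * w K * (Complex.exp (K * y * I) * (I * c K)).re)
    (bound := fun K => ‖K * w K‖ * M) Filter.univ_mem
    (.of_forall (aestronglyMeasurable_wave hw.1 hc)) (integrable_wave hw hc hcM x)
    (aestronglyMeasurable_wave hKw.1 (hc.const_mul I) x)
    (.of_forall fun K y _ => norm_wave_le (w := fun K => K * w K) hIcM y K) (hKw.norm.mul_const M)
    (.of_forall fun K y _ => ?_)).2
  simpa [mul_assoc, mul_comm, mul_left_comm] using
    ((hasDerivAt_re_exp_mul_I_mul K (c K) y).const_mul (w K))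

theorem hasDerivAt_waveIntegral_pow_mul (hw : ∀ m : ℕ, Integrable fun K => K ^ m * w K)
    (hc : AEStronglyMeasurable c) (hcM : ∀ K, ‖c K‖ ≤ M) (n : ℕ) (x : ℝ) :
    HasDerivAt (waveIntegral (fun K => K ^ n * w K) (fun K => I ^ n * c K))
      (waveIntegral (fun K => K ^ (n + 1) * w K) (fun K => I ^ (n + 1) * c K) x) x := by
  have hKw : Integrable fun K => K * (K ^ n * w K) := by
    simpa only [pow_succ, mul_assoc, mul_left_comm] using hw (n + 1)
  simpa only [pow_succ, mul_comm, mul_left_comm] using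
    hasDerivAt_waveIntegral (hw n) hKw (hc.const_mul (I ^ n)) (fun K => by simpa using hcM K) x

theorem iteratedDeriv_waveIntegral (hw : ∀ m : ℕ, Integrable fun K => K ^ m * w K)
    (hc : AEStronglyMeasurable c) (hcM : ∀ K, ‖c K‖ ≤ M) (k : ℕ) :
    iteratedDeriv k (waveIntegral w c) =
      waveIntegral (fun K => K ^ k * w K) (fun K => I ^ k * c K) := by
  induction k with
  | zero => simp
  | succ k ih =>
    ext x
    rw [iteratedDeriv_succ, ih, (hasDerivAt_waveIntegral_pow_mul hw hc hcM k x).deriv]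

end

theorem hasDerivAt_waveIntegral_exp_neg_pow_four {c : ℝ → ℂ} {M T : ℝ}
    (hc : AEStronglyMeasurable c) (hcM : ∀ K, ‖c K‖ ≤ M) (hT : 0 < T) (x : ℝ) :
    HasDerivAt (fun t => waveIntegral (fun K => exp (-K ^ 4 * t)) c x)
      (-waveIntegral (fun K => K ^ 4 * exp (-K ^ 4 * T)) c x) T := by
  have h_decay {t : ℝ} (ht : T / 2 < t) (K : ℝ) :
      ‖K ^ 4 * exp (-K ^ 4 * t)‖ ≤ ‖K ^ 4 * exp (-K ^ 4 * (T / 2))‖ := by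
    simp only [norm_mul, Real.norm_of_nonneg (exp_pos _).le]
    refine mul_le_mul_of_nonneg_left (exp_le_exp.mpr ?_) (by positivity)
    nlinarith [pow_nonneg (sq_nonneg K) 2]
  unfold waveIntegral
  rw [← integral_neg]
  refine (hasDerivAt_integral_of_dominated_loc_of_deriv_le
    (F' := fun t K => -(K ^ 4 * exp (-K ^ 4 * t) * (Complex.exp (K * x * I) * c K).re))
    (bound := fun K => ‖K ^ 4 * exp (-K ^ 4 * (T / 2))‖ * M)
    (Metric.ball_mem_nhds T (half_pos hT))
    (.of_forall fun t => aestronglyMeasurable_wave (by fun_prop) hc x)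
    (integrable_wave (by simpa using integrable_pow_mul_exp_neg_pow_four 0 hT) hc hcM x)
    (aestronglyMeasurable_wave (by fun_prop) hc x).neg
    (.of_forall fun K t ht => ?_)
    ((integrable_pow_mul_exp_neg_pow_four 4 (half_pos hT)).norm.mul_const M)
    (.of_forall fun K t _ => ?_)).2
  · rw [norm_neg]
    have hM : 0 ≤ M := (norm_nonneg _).trans (hcM 0)
    have ht' : T / 2 < t := by
      linarith [(abs_lt.mp (Real.dist_eq t T ▸ Metric.mem_ball.mp ht)).1]
    exact (norm_wave_le (w := fun K => K ^ 4 * exp (-K ^ 4 * t)) hcM x K).trans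
      (mul_le_mul_of_nonneg_right (h_decay ht' K) hM)
  · have := (((hasDerivAt_id t).const_mul (-K ^ 4)).exp).mul_const
      (Complex.exp (K * x * I) * c K).re
    exact this.congr_deriv (by simp only [id]; ring)

/-- The factor `1 / (2 * π)` is the prefactor of `greenFn`. -/
noncomputable def fourierAmplitude (f : ℝ → ℝ) (K : ℝ) : ℂ :=
  (1 / (2 * π)) • ∫ Y : ℝ, Complex.exp (-(K * Y) * I) * f Y

section

variable {f : ℝ → ℝ}

lemma norm_exp_mul_I_mul_ofReal (θ y : ℝ) : ‖Complex.exp (θ * I) * y‖ = ‖y‖ := by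
  rw [norm_mul, Complex.norm_exp_ofReal_mul_I, one_mul, Complex.norm_real]

lemma norm_fourierAmplitude_le (f : ℝ → ℝ) (K : ℝ) :
    ‖fourierAmplitude f K‖ ≤ 1 / (2 * π) * ∫ Y, ‖f Y‖ := by
  rw [fourierAmplitude, norm_smul, Real.norm_of_nonneg (by positivity)]
  gcongr
  refine (norm_integral_le_integral_norm _).trans_eq (integral_congr_ae (.of_forall fun Y => ?_))
  simpa using norm_exp_mul_I_mul_ofReal (-(K * Y)) (f Y)

lemma continuous_fourierAmplitude (hf : Integrable f) : Continuous (fourierAmplitude f) := by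
  refine (continuous_of_dominated (F := fun K Y : ℝ => Complex.exp (-(K * Y) * I) * f Y)
    (fun K => (Continuous.aestronglyMeasurable (by fun_prop)).mul
      (Complex.continuous_ofReal.comp_aestronglyMeasurable hf.1))
    (fun K => .of_forall fun Y => ?_) hf.norm
    (.of_forall fun Y => by fun_prop)).const_smul (1 / (2 * π))
  simpa using (norm_exp_mul_I_mul_ofReal (-(K * Y)) (f Y)).le

lemma integrable_exp_mul_I_mul_ofReal (hf : Integrable f) {θ : ℝ → ℝ} (hθ : Continuous θ) :
    Integrable fun Y => Complex.exp (θ Y * I) * f Y :=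
  hf.ofReal.bdd_mul (c := 1) (Continuous.aestronglyMeasurable (by fun_prop))
    (.of_forall fun Y => (Complex.norm_exp_ofReal_mul_I _).le)

lemma re_exp_mul_fourierAmplitude (hf : Integrable f) (K x : ℝ) :
    (Complex.exp (K * x * I) * fourierAmplitude f K).re =
      1 / (2 * π) * ∫ Y, cos (K * (x - Y)) * f Y := by
  have h_phase (Y : ℝ) : Complex.exp (K * x * I) * (Complex.exp (-(K * Y) * I) * f Y) =
      Complex.exp ((K * (x - Y) : ℝ) * I) * f Y := by
    rw [← mul_assoc, ← Complex.exp_add]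
    push_cast
    ring_nf
  rw [fourierAmplitude, mul_smul_comm, Complex.smul_re, smul_eq_mul, ← integral_const_mul]
  simp_rw [h_phase]
  rw [← Complex.reCLM_apply, ← Complex.reCLM.integral_comp_comm
    (integrable_exp_mul_I_mul_ofReal hf (by fun_prop))]
  simp only [Complex.reCLM_apply, Complex.re_mul_ofReal, Complex.exp_ofReal_mul_I_re]

lemma integral_greenFn_mul_eq_waveIntegral (hf : Integrable f) {t : ℝ} (ht : 0 < t) (x : ℝ) :
    ∫ Y, greenFn (x - Y) t * f Y =
      waveIntegral (fun K => exp (-K ^ 4 * t)) (fourierAmplitude f) x := by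
  have h_exp : Integrable fun K : ℝ => exp (-K ^ 4 * t) := by
    simpa using integrable_pow_mul_exp_neg_pow_four 0 ht
  have h_prod : Integrable
      (Function.uncurry fun Y K : ℝ => exp (-K ^ 4 * t) * cos (K * (x - Y)) * f Y)
      (volume.prod volume) := by
    refine (hf.norm.mul_prod h_exp).mono'
      ((Continuous.aestronglyMeasurable (by fun_prop)).mul hf.1.comp_fst) (.of_forall fun p => ?_)
    simp only [Function.uncurry, norm_mul, Real.norm_of_nonneg (exp_pos _).le]
    rw [mul_comm ‖f p.1‖]
    gcongr
    exact mul_le_of_le_one_right (exp_pos _).le (abs_cos_le_one _)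
  calc ∫ Y, greenFn (x - Y) t * f Y
      = 1 / (2 * π) * ∫ Y, ∫ K, exp (-K ^ 4 * t) * cos (K * (x - Y)) * f Y := by
        simp only [greenFn, mul_assoc, ← integral_mul_const, integral_const_mul]
    _ = 1 / (2 * π) * ∫ K, ∫ Y, exp (-K ^ 4 * t) * cos (K * (x - Y)) * f Y := by
        rw [integral_integral_swap h_prod]
    _ = waveIntegral (fun K => exp (-K ^ 4 * t)) (fourierAmplitude f) x := by
        simp only [waveIntegral, re_exp_mul_fourierAmplitude hf, ← integral_const_mul]
        simp only [mul_left_comm, mul_assoc]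

end

/-- For a Lebesgue integrable initial profile `Δ₀`, the convolution
`Δ(X,T) = ∫ Y, G(X−Y,T) Δ₀(Y) dY` is differentiable in `T`, four times differentiable
in `X`, and satisfies the linearized thin film equation `∂_T Δ + ∂_X⁴ Δ = 0`
for every real `X` and every `T > 0`. -/
theorem convolution_solves_linear_thin_film (Δ₀ : ℝ → ℝ) (hΔ₀ : Integrable Δ₀)
    (Δ : ℝ → ℝ → ℝ) (hΔ : ∀ X T : ℝ, Δ X T = ∫ Y : ℝ, greenFn (X - Y) T * Δ₀ Y)
    (X T : ℝ) (hT : 0 < T) :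
    DifferentiableAt ℝ (fun t => Δ X t) T ∧
    (∀ i < 4, DifferentiableAt ℝ (iteratedDeriv i (fun x => Δ x T)) X) ∧
    deriv (fun t => Δ X t) T + iteratedDeriv 4 (fun x => Δ x T) X = 0 := by
  have hc := (continuous_fourierAmplitude hΔ₀).aestronglyMeasurable (μ := volume)
  have hcM := norm_fourierAmplitude_le Δ₀
  have h_rep {t : ℝ} (ht : 0 < t) (x : ℝ) :
      Δ x t = waveIntegral (fun K => exp (-K ^ 4 * t)) (fourierAmplitude Δ₀) x :=
    (hΔ x t).trans (integral_greenFn_mul_eq_waveIntegral hΔ₀ ht x)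
  have h_time := (hasDerivAt_waveIntegral_exp_neg_pow_four hc hcM hT X).congr_of_eventuallyEq
    ((eventually_gt_nhds hT).mono fun t ht => h_rep ht X)
  have h_moments (m : ℕ) := integrable_pow_mul_exp_neg_pow_four m hT
  have h_space := iteratedDeriv_waveIntegral h_moments hc hcM
  rw [show (fun x => Δ x T) = _ from funext (h_rep hT)]
  refine ⟨h_time.differentiableAt, fun i _ => ?_, ?_⟩
  · rw [h_space]
    exact (hasDerivAt_waveIntegral_pow_mul h_moments hc hcM i X).differentiableAt
  · rw [h_time.deriv, h_space, Complex.I_pow_four]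
    simp only [one_mul, neg_add_cancel]
end

section
/- Main convergence theorem (linear case): let Δ₀ : ℝ → ℝ be Lebesgue integrable with nonzero algebraic volume M₀ = ∫_ℝ Δ₀(Y) dY ≠ 0, and define Δ(X,T) = ∫_ℝ G(X−Y,T) Δ₀(Y) dY for T > 0. Then the rescaled solution converges uniformly in time to the universal self-similar attractor φ: lim_{T→∞} sup_{U∈ℝ} |T^{1/4} · Δ(U·T^{1/4}, T)/M₀ − φ(U)| = 0. -/
open MeasureTheory Real Filter

/-- The universal self-similar attractor `φ(U) = (1/(2π)) ∫ Q, exp(−Q⁴) cos(Q U)`. -/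
noncomputable def phiFn (U : ℝ) : ℝ :=
  (1 / (2 * Real.pi)) * ∫ Q : ℝ, Real.exp (-Q ^ 4) * Real.cos (Q * U)

/-!
Substituting `K = a Q` with `a = T^{1/4}` gives `G(X, a⁴) = a⁻¹ φ(X / a)`, so the rescaled
solution is `∫ φ(U - Y s) Δ₀(Y) / M₀ dY` with `s = T^{-1/4}`: an average of translates of `φ`
against a weight of unit mass. As the cosine transform of a weight with finite first moment, `φ`
is bounded and Lipschitz, so `|φ(U - Y s) - φ(U)| ≤ min (2C) (K s |Y|)` uniformly in `U`, and
dominated convergence makes the integral of this bound against `|Δ₀|` vanish as `s → 0`.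
-/

open Topology

open scoped NNReal

section Approximation

variable {g : ℝ → ℝ}

theorem tendsto_integral_min_mul_abs (hg : Integrable g) {B : ℝ} (hB : 0 ≤ B) (K : ℝ≥0) :
    Tendsto (fun s => ∫ Y, min B (K * |s| * |Y|) * |g Y|) (𝓝 0) (𝓝 0) := by
  have hnonneg (s Y : ℝ) : 0 ≤ min B (K * |s| * |Y|) := le_min hB (by positivity)
  rw [← integral_zero ℝ ℝ]
  refine tendsto_integral_filter_of_dominated_convergence (fun Y => B * |g Y|)
    (.of_forall fun s => ?_) (.of_forall fun s => ae_of_all _ fun Y => ?_)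
    (hg.abs.const_mul B) (ae_of_all _ fun Y => ?_)
  · exact (Continuous.aestronglyMeasurable (by fun_prop)).mul hg.abs.1
  · rw [norm_mul, Real.norm_of_nonneg (hnonneg s Y), Real.norm_eq_abs, abs_abs]
    exact mul_le_mul_of_nonneg_right (min_le_left _ _) (abs_nonneg _)
  · exact Continuous.tendsto' (by fun_prop) _ _ (by simp [hB])

variable {f : ℝ → ℝ} {K : ℝ≥0} {C : ℝ}

theorem abs_integral_comp_sub_mul_sub_le (hf : LipschitzWith K f) (hC : ∀ x, |f x| ≤ C)
    (hg : Integrable g) (s U : ℝ) :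
    |(∫ Y, f (U - Y * s) * g Y) - f U * ∫ Y, g Y| ≤ ∫ Y, min (2 * C) (K * |s| * |Y|) * |g Y| := by
  have hC0 : 0 ≤ C := (abs_nonneg _).trans (hC 0)
  have hint : Integrable fun Y => f (U - Y * s) * g Y :=
    hg.bdd_mul (hf.continuous.comp (by fun_prop)).aestronglyMeasurable (ae_of_all _ fun _ => hC _)
  have hbound : Integrable fun Y => min (2 * C) (K * |s| * |Y|) * |g Y| := by
    refine hg.abs.bdd_mul (c := 2 * C) (Continuous.aestronglyMeasurable (by fun_prop))
      (ae_of_all _ fun Y => ?_)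
    rw [Real.norm_of_nonneg (le_min (by positivity) (by positivity))]
    exact min_le_left _ _
  rw [← integral_const_mul, ← integral_sub hint (hg.const_mul (f U)), ← Real.norm_eq_abs]
  refine norm_integral_le_of_norm_le hbound (ae_of_all _ fun Y => ?_)
  rw [← sub_mul, norm_mul, Real.norm_eq_abs, Real.norm_eq_abs]
  refine mul_le_mul_of_nonneg_right (le_min ?_ ?_) (abs_nonneg _)
  · linarith [abs_sub (f (U - Y * s)) (f U), hC (U - Y * s), hC U]
  · calc |f (U - Y * s) - f U| ≤ K * |U - Y * s - U| := hf.dist_le_mul _ _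
      _ = K * |s| * |Y| := by rw [sub_sub_cancel_left, abs_neg, abs_mul]; ring

theorem tendstoUniformly_integral_comp_sub_mul (hf : LipschitzWith K f) (hC : ∀ x, |f x| ≤ C)
    (hg : Integrable g) :
    TendstoUniformly (fun s U => ∫ Y, f (U - Y * s) * g Y) (fun U => f U * ∫ Y, g Y) (𝓝 0) := by
  have hC0 : 0 ≤ C := (abs_nonneg _).trans (hC 0)
  rw [Metric.tendstoUniformly_iff]
  intro ε hε
  have herr := tendsto_integral_min_mul_abs hg (by positivity : 0 ≤ 2 * C) K
  filter_upwards [herr.eventually (gt_mem_nhds hε)] with s hs U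
  rw [Real.dist_eq, abs_sub_comm]
  exact (abs_integral_comp_sub_mul_sub_le hf hC hg s U).trans_lt hs

end Approximation

section CosineTransform

variable {w : ℝ → ℝ}

theorem integrable_mul_cos_mul (hw : Integrable w) (U : ℝ) :
    Integrable fun Q => w Q * cos (Q * U) :=
  hw.mul_bdd (c := 1) (Continuous.aestronglyMeasurable (by fun_prop))
    (ae_of_all _ fun _ => (Real.norm_eq_abs _).trans_le (abs_cos_le_one _))

theorem abs_integral_mul_cos_le (hw : Integrable w) (U : ℝ) :
    |∫ Q, w Q * cos (Q * U)| ≤ ∫ Q, |w Q| := by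
  rw [← Real.norm_eq_abs]
  refine norm_integral_le_of_norm_le hw.abs (ae_of_all _ fun Q => ?_)
  rw [norm_mul, Real.norm_eq_abs, Real.norm_eq_abs]
  exact mul_le_of_le_one_right (abs_nonneg _) (abs_cos_le_one _)

theorem lipschitzWith_integral_mul_cos (hw : Integrable w) (hQw : Integrable fun Q => Q * w Q) :
    LipschitzWith (∫ Q, |Q * w Q|).toNNReal fun U => ∫ Q, w Q * cos (Q * U) := by
  refine LipschitzWith.of_dist_le' fun a b => ?_
  rw [Real.dist_eq, Real.dist_eq,
    ← integral_sub (integrable_mul_cos_mul hw a) (integrable_mul_cos_mul hw b),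
    ← integral_mul_const, ← Real.norm_eq_abs]
  refine norm_integral_le_of_norm_le (hQw.abs.mul_const _) (ae_of_all _ fun Q => ?_)
  calc ‖w Q * cos (Q * a) - w Q * cos (Q * b)‖ = |w Q| * |cos (Q * a) - cos (Q * b)| := by
        rw [← mul_sub, norm_mul, Real.norm_eq_abs, Real.norm_eq_abs]
    _ ≤ |w Q| * |Q * a - Q * b| :=
        mul_le_mul_of_nonneg_left (abs_cos_sub_cos_le _ _) (abs_nonneg _)
    _ = |Q * w Q| * |a - b| := by rw [← mul_sub, abs_mul, abs_mul]; ring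

end CosineTransform

theorem exp_neg_pow_four_le (Q : ℝ) : exp (-Q ^ 4) ≤ exp 1 * exp (-1 * Q ^ 2) := by
  rw [← exp_add]
  exact exp_le_exp.2 (by nlinarith [sq_nonneg (Q ^ 2 - 1)])

theorem integrable_exp_neg_pow_four : Integrable fun Q : ℝ => exp (-Q ^ 4) :=
  ((integrable_exp_neg_mul_sq one_pos).const_mul (exp 1)).mono'
    (Continuous.aestronglyMeasurable (by fun_prop))
    (ae_of_all _ fun Q => (Real.norm_of_nonneg (exp_pos _).le).trans_le (exp_neg_pow_four_le Q))

theorem integrable_mul_exp_neg_pow_four : Integrable fun Q : ℝ => Q * exp (-Q ^ 4) := by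
  refine ((integrable_mul_exp_neg_mul_sq one_pos).norm.const_mul (exp 1)).mono'
    (Continuous.aestronglyMeasurable (by fun_prop)) (ae_of_all _ fun Q => ?_)
  rw [norm_mul, norm_mul, Real.norm_of_nonneg (exp_pos _).le, Real.norm_of_nonneg (exp_pos _).le,
    mul_left_comm]
  exact mul_le_mul_of_nonneg_left (exp_neg_pow_four_le Q) (norm_nonneg Q)

theorem phiFn_eq_integral :
    phiFn = fun U => ∫ Q, (1 / (2 * π) * exp (-Q ^ 4)) * cos (Q * U) := by
  ext U
  simp only [phiFn, ← integral_const_mul, mul_assoc]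

theorem abs_phiFn_le (U : ℝ) : |phiFn U| ≤ ∫ Q, |1 / (2 * π) * exp (-Q ^ 4)| := by
  rw [phiFn_eq_integral]
  exact abs_integral_mul_cos_le (integrable_exp_neg_pow_four.const_mul _) U

theorem lipschitzWith_phiFn :
    LipschitzWith (∫ Q, |Q * (1 / (2 * π) * exp (-Q ^ 4))|).toNNReal phiFn := by
  rw [phiFn_eq_integral]
  refine lipschitzWith_integral_mul_cos (integrable_exp_neg_pow_four.const_mul _) ?_
  simpa only [mul_left_comm] using integrable_mul_exp_neg_pow_four.const_mul (1 / (2 * π))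

theorem greenFn_pow_four {a : ℝ} (ha : 0 < a) (X : ℝ) :
    greenFn X (a ^ 4) = a⁻¹ * phiFn (X * a⁻¹) := by
  have hsubst (K : ℝ) : exp (-K ^ 4 * a ^ 4) * cos (K * X)
      = exp (-(a * K) ^ 4) * cos (a * K * (X * a⁻¹)) := by
    congr 2 <;> field_simp
  simp_rw [greenFn, phiFn, hsubst]
  rw [Measure.integral_comp_mul_left (fun Q => exp (-Q ^ 4) * cos (Q * (X * a⁻¹))),
    smul_eq_mul, abs_inv, abs_of_pos ha]
  ring

theorem mul_integral_greenFn_pow_four {a : ℝ} (ha : 0 < a) (g : ℝ → ℝ) (U : ℝ) :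
    a * ∫ Y, greenFn (U * a - Y) (a ^ 4) * g Y = ∫ Y, phiFn (U - Y * a⁻¹) * g Y := by
  have hsubst (Y : ℝ) : greenFn (U * a - Y) (a ^ 4) * g Y = a⁻¹ * (phiFn (U - Y * a⁻¹) * g Y) := by
    rw [greenFn_pow_four ha, sub_mul, mul_inv_cancel_right₀ ha.ne', mul_assoc]
  simp_rw [hsubst, integral_const_mul, mul_inv_cancel_left₀ ha.ne']

/-- Main convergence theorem (linear case): for a Lebesgue integrable initial profile `Δ₀`
with nonzero algebraic volume `M₀`, and `Δ(X,T) = ∫ Y, G(X−Y,T) Δ₀(Y) dY`, the rescaled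
solution `U ↦ T^{1/4} Δ(U T^{1/4}, T)/M₀` converges uniformly in `U`, as `T → ∞`, to the
universal self-similar attractor `φ`. -/
theorem uniform_convergence_to_attractor (Δ₀ : ℝ → ℝ) (hΔ₀ : Integrable Δ₀)
    (M₀ : ℝ) (hM₀ : M₀ = ∫ Y : ℝ, Δ₀ Y) (hM₀_ne : M₀ ≠ 0)
    (Δ : ℝ → ℝ → ℝ) (hΔ : ∀ X T : ℝ, Δ X T = ∫ Y : ℝ, greenFn (X - Y) T * Δ₀ Y) :
    TendstoUniformly
      (fun (T : ℝ) (U : ℝ) => T ^ ((1 / 4 : ℝ)) * Δ (U * T ^ ((1 / 4 : ℝ))) T / M₀)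
      phiFn atTop := by
  have hunit : ∫ Y, Δ₀ Y / M₀ = 1 := by rw [integral_div, ← hM₀, div_self hM₀_ne]
  have hlim := tendstoUniformly_integral_comp_sub_mul lipschitzWith_phiFn abs_phiFn_le
    (hΔ₀.div_const M₀)
  simp only [hunit, mul_one] at hlim
  have hscale : Tendsto (fun T : ℝ => (T ^ (1 / 4 : ℝ))⁻¹) atTop (𝓝 0) :=
    (tendsto_rpow_atTop (by norm_num)).inv_tendsto_atTop
  have hlimT : TendstoUniformly
      (fun T U => ∫ Y, phiFn (U - Y * (T ^ (1 / 4 : ℝ))⁻¹) * (Δ₀ Y / M₀)) phiFn atTop :=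
    fun u hu => hscale.eventually (hlim u hu)
  refine tendstoUniformlyOn_univ.1 ((tendstoUniformlyOn_univ.2 hlimT).congr ?_)
  filter_upwards [eventually_gt_atTop 0] with T hT U _
  have hT4 : (T ^ (1 / 4 : ℝ)) ^ 4 = T := by
    rw [← rpow_natCast, ← rpow_mul hT.le]; norm_num
  have hrescaled := mul_integral_greenFn_pow_four (rpow_pos_of_pos hT (1 / 4)) Δ₀ U
  rw [hT4] at hrescaled
  simp only [hΔ, hrescaled, ← integral_div, mul_div_assoc]
end
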